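/- Let Γ be a finite graph and for each vertex v let G_v and H_v be finite groups with |G_v| = |H_v|. Let G_Γ and H_Γ be the graph products, with generating sets S_1 = ⋃_v (G_v \ {e}) and S_2 = ⋃_v (H_v \ {e}). Then Cay(G_Γ, S_1) ≅ Cay(H_Γ, S_2); in particular, G_Γ and H_Γ are isometric with respect to the corresponding word metrics. -/

import Mathlib

/-- The Cayley graph of a group `G` with respect to a set `S`:
vertices are elements of `G`, and `g` is adjacent to `g * s` for `s ∈ S`. -/
def cayley (G : Type*) [Group G] (S : Set G) : SimpleGraph G :=
  SimpleGraph.fromRel (fun g h => g⁻¹ * h ∈ S)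

/-- The normal closure of the commutators coming from edges of `Γ`. -/
def graphProductRels {V : Type*} (Γ : SimpleGraph V) (G : V → Type*) [∀ v, Group (G v)] :
    Subgroup (Monoid.CoprodI G) :=
  Subgroup.normalClosure {x | ∃ (u v : V) (a : G u) (b : G v), Γ.Adj u v ∧
    x = Monoid.CoprodI.of a * Monoid.CoprodI.of b *
        (Monoid.CoprodI.of a)⁻¹ * (Monoid.CoprodI.of b)⁻¹}

instance {V : Type*} (Γ : SimpleGraph V) (G : V → Type*) [∀ v, Group (G v)] :
    (graphProductRels Γ G).Normal :=
  Subgroup.normalClosure_normal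

/-- The graph product of the groups `G v` over the simplicial graph `Γ`. -/
def GraphProduct {V : Type*} (Γ : SimpleGraph V) (G : V → Type*) [∀ v, Group (G v)] : Type _ :=
  Monoid.CoprodI G ⧸ graphProductRels Γ G

instance {V : Type*} (Γ : SimpleGraph V) (G : V → Type*) [∀ v, Group (G v)] :
    Group (GraphProduct Γ G) :=
  QuotientGroup.Quotient.group _

/-- The canonical map from a vertex group into the graph product. -/
def GraphProduct.of {V : Type*} (Γ : SimpleGraph V) (G : V → Type*) [∀ v, Group (G v)]
    {v : V} : G v →* GraphProduct Γ G :=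
  (QuotientGroup.mk' (graphProductRels Γ G)).comp Monoid.CoprodI.of

set_option linter.unusedSectionVars false

open scoped Classical

namespace GPAux

variable {V : Type*} (Γ : SimpleGraph V) (G : V → Type*) [∀ v, Group (G v)]

/-- A letter: a vertex together with an element of its group. -/
abbrev Ltr := (v : V) × G v

/-- `CanReach v w` : there is a letter at vertex `v` in `w` preceded only by
letters at vertices adjacent to `v`. -/
def CanReach (v : V) : List (Ltr G) → Prop
  | [] => False
  | a :: w => a.1 = v ∨ (Γ.Adj v a.1 ∧ CanReach v w)

/-- Multiply `g : G v` onto a word on the left, merging with the first reachable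
`v`-letter if any. -/
noncomputable def lmul (v : V) (g : G v) : List (Ltr G) → List (Ltr G)
  | [] => if g = 1 then [] else [⟨v, g⟩]
  | ⟨u, h⟩ :: w =>
    if huv : u = v then
      (if g * (huv ▸ h) = 1 then w else ⟨v, g * (huv ▸ h)⟩ :: w)
    else if Γ.Adj v u then ⟨u, h⟩ :: lmul v g w
    else if g = 1 then ⟨u, h⟩ :: w else ⟨v, g⟩ :: ⟨u, h⟩ :: w

/-- Reduced words. -/
inductive Red : List (Ltr G) → Prop
  | nil : Red []
  | cons {v : V} {g : G v} {w : List (Ltr G)} :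
      g ≠ 1 → ¬ CanReach Γ G v w → Red w → Red (⟨v, g⟩ :: w)

/-- Shuffle equivalence of words. -/
inductive WEq : List (Ltr G) → List (Ltr G) → Prop
  | refl (w) : WEq w w
  | symm {w w'} : WEq w w' → WEq w' w
  | trans {w₁ w₂ w₃} : WEq w₁ w₂ → WEq w₂ w₃ → WEq w₁ w₃
  | cons (a) {w w'} : WEq w w' → WEq (a :: w) (a :: w')
  | swap (a b : Ltr G) (w) : Γ.Adj a.1 b.1 → WEq (a :: b :: w) (b :: a :: w)

variable {Γ G}

theorem WEq.canReach {v : V} {w w' : List (Ltr G)} (h : WEq Γ G w w') :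
    CanReach Γ G v w ↔ CanReach Γ G v w' := by
  induction h with
  | refl => rfl
  | symm _ ih => exact ih.symm
  | trans _ _ ih1 ih2 => exact ih1.trans ih2
  | cons a _ ih => simp only [CanReach, ih]
  | swap a b w hab =>
      simp only [CanReach]
      constructor
      · rintro (h1 | ⟨h2, h3 | ⟨h4, h5⟩⟩)
        · exact Or.inr ⟨h1 ▸ hab, Or.inl h1⟩
        · exact Or.inl h3
        · exact Or.inr ⟨h4, Or.inr ⟨h2, h5⟩⟩
      · rintro (h1 | ⟨h2, h3 | ⟨h4, h5⟩⟩)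
        · exact Or.inr ⟨h1 ▸ hab.symm, Or.inl h1⟩
        · exact Or.inl h3
        · exact Or.inr ⟨h4, Or.inr ⟨h2, h5⟩⟩

theorem red_cons_iff {v : V} {g : G v} {w : List (Ltr G)} :
    Red Γ G (⟨v, g⟩ :: w) ↔ g ≠ 1 ∧ ¬ CanReach Γ G v w ∧ Red Γ G w := by
  constructor
  · intro h
    cases h with
    | cons h1 h2 h3 => exact ⟨h1, h2, h3⟩
  · rintro ⟨h1, h2, h3⟩
    exact Red.cons h1 h2 h3

theorem WEq.red {w w' : List (Ltr G)} (h : WEq Γ G w w') : Red Γ G w ↔ Red Γ G w' := by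
  induction h with
  | refl => rfl
  | symm _ ih => exact ih.symm
  | trans _ _ ih1 ih2 => exact ih1.trans ih2
  | cons a hw ih =>
      obtain ⟨u, g⟩ := a
      rw [red_cons_iff, red_cons_iff, ih, hw.canReach]
  | swap a b w hab =>
      obtain ⟨u, g⟩ := a
      obtain ⟨u', g'⟩ := b
      have huu' : u ≠ u' := Γ.ne_of_adj hab
      rw [red_cons_iff, red_cons_iff, red_cons_iff, red_cons_iff]
      simp only [CanReach]
      constructor
      · rintro ⟨h1, h2, h3, h4, h5⟩
        push_neg at h2
        refine ⟨h3, ?_, h1, h2.2 hab, h5⟩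
        rintro (h6 | ⟨h6, h7⟩)
        · exact huu' h6
        · exact h4 h7
      · rintro ⟨h1, h2, h3, h4, h5⟩
        push_neg at h2
        refine ⟨h3, ?_, h1, h2.2 hab.symm, h5⟩
        rintro (h6 | ⟨h6, h7⟩)
        · exact huu' h6.symm
        · exact h4 h7


theorem lmul_nil (v : V) (g : G v) :
    lmul Γ G v g [] = if g = 1 then [] else [⟨v, g⟩] := rfl

theorem lmul_cons_same (v : V) (g h : G v) (w : List (Ltr G)) :
    lmul Γ G v g (⟨v, h⟩ :: w) = if g * h = 1 then w else ⟨v, g * h⟩ :: w := by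
  simp [lmul]

theorem lmul_cons_adj {v u : V} (hadj : Γ.Adj v u) (g : G v) (h : G u) (w : List (Ltr G)) :
    lmul Γ G v g (⟨u, h⟩ :: w) = ⟨u, h⟩ :: lmul Γ G v g w := by
  have hne : u ≠ v := (Γ.ne_of_adj hadj).symm
  simp [lmul, hne, hadj]

theorem lmul_cons_blk {v u : V} (hne : u ≠ v) (hnadj : ¬ Γ.Adj v u) (g : G v) (h : G u)
    (w : List (Ltr G)) :
    lmul Γ G v g (⟨u, h⟩ :: w) =
      if g = 1 then ⟨u, h⟩ :: w else ⟨v, g⟩ :: ⟨u, h⟩ :: w := by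
  simp [lmul, hne, hnadj]


theorem canReach_lmul {u v : V} (hne : u ≠ v) (hadj : Γ.Adj u v) (g : G v)
    (w : List (Ltr G)) : CanReach Γ G u (lmul Γ G v g w) ↔ CanReach Γ G u w := by
  induction w with
  | nil =>
      rw [lmul_nil]
      split_ifs with h
      · rfl
      · simp [CanReach, hne.symm, hadj]
  | cons a w ih =>
      obtain ⟨z, c⟩ := a
      by_cases hzv : z = v
      · subst hzv
        rw [lmul_cons_same]
        split_ifs with h
        · simp [CanReach, hne.symm, hadj]
        · simp [CanReach]
      · by_cases hvz : Γ.Adj v z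
        · rw [lmul_cons_adj hvz]
          simp [CanReach, ih]
        · rw [lmul_cons_blk hzv hvz]
          split_ifs with h
          · rfl
          · simp [CanReach, hne.symm, hadj]

theorem red_lmul {v : V} (g : G v) {w : List (Ltr G)} (hw : Red Γ G w) :
    Red Γ G (lmul Γ G v g w) := by
  induction hw with
  | nil =>
      rw [lmul_nil]
      split_ifs with h
      · exact Red.nil
      · exact Red.cons h (fun h' => h') Red.nil
  | @cons z c w hc hr hred ih =>
      by_cases hzv : z = v
      · subst hzv
        rw [lmul_cons_same]
        split_ifs with h
        · exact hred
        · exact Red.cons h hr hred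
      · by_cases hvz : Γ.Adj v z
        · rw [lmul_cons_adj hvz]
          refine Red.cons hc ?_ ih
          rw [canReach_lmul hzv hvz.symm]
          exact hr
        · rw [lmul_cons_blk hzv hvz]
          split_ifs with h
          · exact Red.cons hc hr hred
          · refine Red.cons h ?_ (Red.cons hc hr hred)
            simp [CanReach, hzv, hvz]

theorem lmul_one_not_reach {v : V} {w : List (Ltr G)} (hw : ¬ CanReach Γ G v w) :
    lmul Γ G v (1 : G v) w = w := by
  induction w with
  | nil => simp [lmul_nil]
  | cons a w ih =>
      obtain ⟨z, c⟩ := a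
      simp only [CanReach, not_or, not_and] at hw
      by_cases hvz : Γ.Adj v z
      · rw [lmul_cons_adj hvz, ih (hw.2 hvz)]
      · rw [lmul_cons_blk hw.1 hvz, if_pos rfl]

theorem lmul_one {v : V} {w : List (Ltr G)} (hw : Red Γ G w) :
    lmul Γ G v (1 : G v) w = w := by
  induction hw with
  | nil => simp [lmul_nil]
  | @cons z c w hc hr hred ih =>
      by_cases hzv : z = v
      · subst hzv
        rw [lmul_cons_same, if_neg (by simpa using hc), one_mul]
      · by_cases hvz : Γ.Adj v z
        · rw [lmul_cons_adj hvz, ih]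
        · rw [lmul_cons_blk hzv hvz, if_pos rfl]

theorem lmul_not_reach {v : V} {g : G v} {w : List (Ltr G)} (hw : ¬ CanReach Γ G v w)
    (hg : g ≠ 1) : WEq Γ G (lmul Γ G v g w) (⟨v, g⟩ :: w) := by
  induction w with
  | nil => rw [lmul_nil, if_neg hg]; exact WEq.refl _
  | cons a w ih =>
      obtain ⟨z, c⟩ := a
      simp only [CanReach, not_or, not_and] at hw
      by_cases hvz : Γ.Adj v z
      · rw [lmul_cons_adj hvz]
        refine WEq.trans (WEq.cons _ (ih (hw.2 hvz))) ?_
        exact WEq.swap ⟨z, c⟩ ⟨v, g⟩ w hvz.symm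
      · rw [lmul_cons_blk hw.1 hvz, if_neg hg]
        exact WEq.refl _

theorem lmul_lmul {v : V} (g h : G v) {w : List (Ltr G)} (hw : Red Γ G w) :
    WEq Γ G (lmul Γ G v g (lmul Γ G v h w)) (lmul Γ G v (g * h) w) := by
  induction hw with
  | nil =>
      by_cases hh : h = 1
      · subst hh; rw [lmul_nil, if_pos rfl, mul_one]; exact WEq.refl _
      · rw [lmul_nil, if_neg hh, lmul_cons_same, lmul_nil]
        exact WEq.refl _
  | @cons z c w hc hr hred ih =>
      by_cases hzv : z = v
      · subst hzv
        rw [lmul_cons_same]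
        by_cases hhc : h * c = 1
        · rw [if_pos hhc, lmul_cons_same]
          have hgc : g * h * c = g := by rw [mul_assoc, hhc, mul_one]
          rw [hgc]
          by_cases hg : g = 1
          · subst hg; rw [if_pos rfl, lmul_one hred]; exact WEq.refl _
          · rw [if_neg hg]
            exact lmul_not_reach hr hg
        · rw [if_neg hhc, lmul_cons_same, lmul_cons_same, ← mul_assoc]
          exact WEq.refl _
      · by_cases hvz : Γ.Adj v z
        · rw [lmul_cons_adj hvz, lmul_cons_adj hvz, lmul_cons_adj hvz]
          exact WEq.cons _ ih
        · rw [lmul_cons_blk hzv hvz]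
          by_cases hh : h = 1
          · rw [if_pos hh, hh, mul_one]; exact WEq.refl _
          · rw [if_neg hh, lmul_cons_same, lmul_cons_blk hzv hvz]
            exact WEq.refl _

theorem lmul_comm {u v : V} (hadj : Γ.Adj u v) (a : G u) (b : G v) (w : List (Ltr G)) :
    WEq Γ G (lmul Γ G u a (lmul Γ G v b w)) (lmul Γ G v b (lmul Γ G u a w)) := by
  have huv : u ≠ v := Γ.ne_of_adj hadj
  have hvu : v ≠ u := huv.symm
  have hau : Γ.Adj v u := hadj.symm
  induction w with
  | nil =>
      by_cases hb : b = 1 <;> by_cases ha : a = 1 <;>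
        simp [lmul, hb, ha, huv, hvu, hadj, hau] <;>
        first
          | exact WEq.refl _
          | exact WEq.swap ⟨v, b⟩ ⟨u, a⟩ [] hau
  | cons x w ih =>
      obtain ⟨z, c⟩ := x
      by_cases hzv : z = v
      · subst hzv
        by_cases hbc : b * c = 1 <;>
          simp [lmul_cons_same, lmul_cons_adj hadj, hbc] <;>
          exact WEq.refl _
      · by_cases hzu : z = u
        · subst hzu
          by_cases hac : a * c = 1 <;>
            simp [lmul_cons_same, lmul_cons_adj hau, hac] <;>
            exact WEq.refl _
        · by_cases hvz : Γ.Adj v z <;> by_cases huz : Γ.Adj u z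
          · simp only [lmul_cons_adj hvz, lmul_cons_adj huz]
            exact WEq.cons _ ih
          · by_cases ha : a = 1 <;>
              simp [lmul_cons_adj hvz, lmul_cons_blk hzu huz, lmul_cons_adj hau, ha] <;>
              exact WEq.refl _
          · by_cases hb : b = 1 <;>
              simp [lmul_cons_adj huz, lmul_cons_blk hzv hvz, lmul_cons_adj hadj, hb] <;>
              exact WEq.refl _
          · by_cases hb : b = 1 <;> by_cases ha : a = 1 <;>
              simp [lmul_cons_blk hzv hvz, lmul_cons_blk hzu huz, lmul_cons_adj hadj,
                lmul_cons_adj hau, hb, ha] <;>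
              first
                | exact WEq.refl _
                | exact WEq.swap ⟨v, b⟩ ⟨u, a⟩ (⟨z, c⟩ :: w) hau


theorem WEq.lmul_congr (v : V) (g : G v) {w w' : List (Ltr G)} (h : WEq Γ G w w') :
    WEq Γ G (lmul Γ G v g w) (lmul Γ G v g w') := by
  induction h with
  | refl => exact WEq.refl _
  | symm _ ih => exact ih.symm
  | trans _ _ ih1 ih2 => exact ih1.trans ih2
  | cons a hw ih =>
      obtain ⟨z, c⟩ := a
      by_cases hzv : z = v
      · subst hzv
        rw [lmul_cons_same, lmul_cons_same]
        split_ifs with h1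
        · exact hw
        · exact WEq.cons _ hw
      · by_cases hvz : Γ.Adj v z
        · rw [lmul_cons_adj hvz, lmul_cons_adj hvz]
          exact WEq.cons _ ih
        · rw [lmul_cons_blk hzv hvz, lmul_cons_blk hzv hvz]
          split_ifs with h1
          · exact WEq.cons _ hw
          · exact WEq.cons _ (WEq.cons _ hw)
  | swap a b w hab =>
      obtain ⟨z, c⟩ := a
      obtain ⟨y, d⟩ := b
      have hzy : Γ.Adj z y := hab
      by_cases hzv : z = v
      · subst hzv
        rw [lmul_cons_same, lmul_cons_adj hzy, lmul_cons_same]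
        split_ifs with h1
        · exact WEq.refl _
        · exact WEq.swap ⟨z, g * c⟩ ⟨y, d⟩ w hzy
      · by_cases hyv : y = v
        · subst hyv
          rw [lmul_cons_adj hzy.symm, lmul_cons_same, lmul_cons_same]
          split_ifs with h1
          · exact WEq.refl _
          · exact WEq.swap ⟨z, c⟩ ⟨y, g * d⟩ w hzy
        · by_cases hvz : Γ.Adj v z <;> by_cases hvy : Γ.Adj v y
          · rw [lmul_cons_adj hvz, lmul_cons_adj hvy, lmul_cons_adj hvy,
              lmul_cons_adj hvz]
            exact WEq.swap _ _ _ hzy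
          · rw [lmul_cons_adj hvz, lmul_cons_blk hyv hvy, lmul_cons_blk hyv hvy]
            split_ifs with h1
            · exact WEq.swap _ _ _ hzy
            · exact (WEq.swap ⟨z, c⟩ ⟨v, g⟩ _ hvz.symm).trans
                (WEq.cons _ (WEq.swap _ _ _ hzy))
          · rw [lmul_cons_blk hzv hvz, lmul_cons_adj hvy, lmul_cons_blk hzv hvz]
            split_ifs with h1
            · exact WEq.swap _ _ _ hzy
            · exact (WEq.cons _ (WEq.swap _ _ _ hzy)).trans
                (WEq.swap ⟨v, g⟩ ⟨y, d⟩ _ hvy)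
          · rw [lmul_cons_blk hzv hvz, lmul_cons_blk hyv hvy]
            split_ifs with h1
            · exact WEq.swap _ _ _ hzy
            · exact WEq.cons _ (WEq.swap _ _ _ hzy)

theorem WEq.length {w w' : List (Ltr G)} (h : WEq Γ G w w') : w.length = w'.length := by
  induction h with
  | refl => rfl
  | symm _ ih => exact ih.symm
  | trans _ _ ih1 ih2 => exact ih1.trans ih2
  | cons a _ ih => simp [ih]
  | swap a b w hab => simp


variable (Γ G) in
/-- Reduced words. -/
def RW := {w : List (Ltr G) // Red Γ G w}

instance rwSetoid : Setoid (RW Γ G) :=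
  ⟨fun a b => WEq Γ G a.1 b.1,
   fun _ => WEq.refl _, WEq.symm, WEq.trans⟩

variable (Γ G) in
/-- Normal forms: reduced words up to shuffles. -/
def NF := Quotient (rwSetoid (Γ := Γ) (G := G))

/-- Left multiplication on normal forms. -/
noncomputable def Lmul (v : V) (g : G v) : NF Γ G → NF Γ G :=
  Quotient.map (fun w => ⟨lmul Γ G v g w.1, red_lmul g w.2⟩)
    (fun _ _ h => WEq.lmul_congr v g h)

theorem Lmul_mk (v : V) (g : G v) (w : RW Γ G) :
    Lmul v g (⟦w⟧ : NF Γ G) = ⟦⟨lmul Γ G v g w.1, red_lmul g w.2⟩⟧ := rfl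

theorem Lmul_one (v : V) (n : NF Γ G) : Lmul v (1 : G v) n = n := by
  induction n using Quotient.ind with
  | _ w => exact congrArg _ (Subtype.ext (lmul_one w.2))

theorem Lmul_Lmul (v : V) (g h : G v) (n : NF Γ G) :
    Lmul v g (Lmul v h n) = Lmul v (g * h) n := by
  induction n using Quotient.ind with
  | _ w => exact Quotient.sound (lmul_lmul g h w.2)

/-- The permutation of normal forms induced by `g : G v`. -/
noncomputable def nfPerm (v : V) (g : G v) : Equiv.Perm (NF Γ G) where
  toFun := Lmul v g
  invFun := Lmul v g⁻¹
  left_inv n := by rw [Lmul_Lmul, inv_mul_cancel, Lmul_one]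
  right_inv n := by rw [Lmul_Lmul, mul_inv_cancel, Lmul_one]

variable (Γ) in
/-- The homomorphism `G v →* Perm (NF)`. -/
noncomputable def nfHom (v : V) : G v →* Equiv.Perm (NF Γ G) where
  toFun := nfPerm v
  map_one' := Equiv.ext fun n => Lmul_one v n
  map_mul' g h := Equiv.ext fun n => (Lmul_Lmul v g h n).symm

theorem nfHom_comm {u v : V} (hadj : Γ.Adj u v) (a : G u) (b : G v) :
    nfHom Γ (G := G) u a * nfHom Γ v b = nfHom Γ v b * nfHom Γ u a := by
  refine Equiv.ext fun n => ?_
  induction n using Quotient.ind with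
  | _ w => exact Quotient.sound (lmul_comm hadj a b w.1)

variable (Γ) in
/-- The lifted homomorphism from the free product. -/
noncomputable def nfHom' : Monoid.CoprodI G →* Equiv.Perm (NF Γ G) :=
  Monoid.CoprodI.lift (nfHom Γ)

theorem nfHom'_rels : graphProductRels Γ G ≤ (nfHom' Γ (G := G)).ker := by
  apply Subgroup.normalClosure_le_normal
  rintro x ⟨u, v, a, b, hadj, rfl⟩
  have h : nfHom' Γ (G := G) (Monoid.CoprodI.of a) * nfHom' Γ (Monoid.CoprodI.of b) =
      nfHom' Γ (Monoid.CoprodI.of b) * nfHom' Γ (Monoid.CoprodI.of a) := by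
    rw [nfHom', Monoid.CoprodI.lift_of, Monoid.CoprodI.lift_of]
    exact nfHom_comm hadj a b
  simp only [SetLike.mem_coe, MonoidHom.mem_ker, map_mul, map_inv]
  rw [h]
  group

variable (Γ) in
/-- The action of the graph product on normal forms. -/
noncomputable def nfAct : GraphProduct Γ G →* Equiv.Perm (NF Γ G) :=
  QuotientGroup.lift _ (nfHom' Γ) nfHom'_rels

theorem nfAct_of {v : V} (g : G v) :
    nfAct Γ (GraphProduct.of Γ G g) = nfHom Γ v g := by
  show nfAct Γ (QuotientGroup.mk (Monoid.CoprodI.of g)) = nfHom Γ v g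
  rw [show nfAct Γ (QuotientGroup.mk (Monoid.CoprodI.of g)) =
      nfHom' Γ (Monoid.CoprodI.of g) from rfl, nfHom', Monoid.CoprodI.lift_of]

variable (Γ G) in
/-- The empty normal form. -/
def nfOne : NF Γ G := ⟦⟨[], Red.nil⟩⟧

variable (Γ G) in
/-- From a group element to its normal form. -/
noncomputable def toNF (x : GraphProduct Γ G) : NF Γ G := nfAct Γ x (nfOne Γ G)

variable (Γ G) in
/-- From a word to the corresponding product in the graph product. -/
def prodW (w : List (Ltr G)) : GraphProduct Γ G :=
  (w.map fun a => GraphProduct.of Γ G a.2).prod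

theorem of_comm {u v : V} (hadj : Γ.Adj u v) (a : G u) (b : G v) :
    GraphProduct.of Γ G a * GraphProduct.of Γ G b =
      GraphProduct.of Γ G b * GraphProduct.of Γ G a := by
  show QuotientGroup.mk _ = QuotientGroup.mk _
  rw [QuotientGroup.eq]
  refine Subgroup.subset_normalClosure ?_
  refine ⟨v, u, b⁻¹, a⁻¹, hadj.symm, ?_⟩
  simp [mul_assoc]

theorem prodW_cons (a : Ltr G) (w : List (Ltr G)) :
    prodW Γ G (a :: w) = GraphProduct.of Γ G a.2 * prodW Γ G w := by
  simp [prodW]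

theorem prodW_weq {w w' : List (Ltr G)} (h : WEq Γ G w w') :
    prodW Γ G w = prodW Γ G w' := by
  induction h with
  | refl => rfl
  | symm _ ih => exact ih.symm
  | trans _ _ ih1 ih2 => exact ih1.trans ih2
  | cons a _ ih => rw [prodW_cons, prodW_cons, ih]
  | swap a b w hab =>
      rw [prodW_cons, prodW_cons, prodW_cons, prodW_cons, ← mul_assoc, ← mul_assoc,
        of_comm hab]

variable (Γ G) in
/-- From a normal form to the corresponding group element. -/
def ofNF : NF Γ G → GraphProduct Γ G :=
  Quotient.lift (fun w => prodW Γ G w.1) fun _ _ h => prodW_weq h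

theorem prodW_lmul (v : V) (g : G v) (w : List (Ltr G)) :
    prodW Γ G (lmul Γ G v g w) = GraphProduct.of Γ G g * prodW Γ G w := by
  induction w with
  | nil =>
      rw [lmul_nil]
      split_ifs with h
      · simp [prodW, h]
      · simp [prodW]
  | cons a w ih =>
      obtain ⟨z, c⟩ := a
      by_cases hzv : z = v
      · subst hzv
        rw [lmul_cons_same]
        split_ifs with h
        · rw [prodW_cons, ← mul_assoc, ← map_mul, h, map_one, one_mul]
        · rw [prodW_cons, prodW_cons, ← mul_assoc, ← map_mul]
      · by_cases hvz : Γ.Adj v z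
        · rw [lmul_cons_adj hvz, prodW_cons, prodW_cons, ih, ← mul_assoc, ← mul_assoc,
            of_comm hvz.symm]
        · rw [lmul_cons_blk hzv hvz]
          split_ifs with h
          · simp [h]
          · rw [prodW_cons, prodW_cons]

theorem ofNF_toNF (x : GraphProduct Γ G) : ofNF Γ G (toNF Γ G x) = x := by
  obtain ⟨y, rfl⟩ := QuotientGroup.mk_surjective x
  have key : ∀ y : Monoid.CoprodI G, ∀ n : NF Γ G,
      ofNF Γ G (nfHom' Γ y n) = QuotientGroup.mk y * ofNF Γ G n := by
    intro y
    induction y using Monoid.CoprodI.induction_on with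
    | one => intro n; simp; exact (one_mul _).symm
    | of i m =>
        intro n
        induction n using Quotient.ind with
        | _ w =>
            rw [nfHom', Monoid.CoprodI.lift_of]
            show ofNF Γ G (Lmul i m ⟦w⟧) = _
            rw [Lmul_mk]
            show prodW Γ G (lmul Γ G i m w.1) = _
            rw [prodW_lmul]
            rfl
    | mul x y ihx ihy =>
        intro n
        rw [map_mul, Equiv.Perm.mul_apply, ihx, ihy, QuotientGroup.mk_mul]
        exact (mul_assoc _ _ _).symm
  show ofNF Γ G (nfAct Γ (QuotientGroup.mk y) (nfOne Γ G)) = _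
  rw [show nfAct Γ (QuotientGroup.mk y) = nfHom' Γ y from rfl, key]
  show _ * prodW Γ G [] = _
  simp [prodW]
  exact mul_one _

theorem toNF_ofNF (n : NF Γ G) : toNF Γ G (ofNF Γ G n) = n := by
  induction n using Quotient.ind with
  | _ w =>
      obtain ⟨w, hw⟩ := w
      induction hw with
      | nil =>
          show toNF Γ G (prodW Γ G []) = _
          simp only [prodW, List.map_nil, List.prod_nil]
          show nfAct Γ 1 (nfOne Γ G) = _
          rw [map_one]
          rfl
      | @cons v g w hg hr hred ih =>
          show toNF Γ G (prodW Γ G (⟨v, g⟩ :: w)) = _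
          rw [prodW_cons]
          show nfAct Γ _ (nfOne Γ G) = _
          rw [map_mul, Equiv.Perm.mul_apply, nfAct_of]
          have : nfAct Γ (prodW Γ G w) (nfOne Γ G) = ⟦⟨w, hred⟩⟧ := ih
          show nfHom Γ v g (toNF Γ G (prodW Γ G w)) = _
          rw [show toNF Γ G (prodW Γ G w) = ⟦⟨w, hred⟩⟧ from ih]
          show Lmul v g ⟦⟨w, hred⟩⟧ = _
          show (⟦⟨lmul Γ G v g w, red_lmul g hred⟩⟧ : NF Γ G) = _
          exact Quotient.sound (lmul_not_reach hr hg)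

variable (Γ G) in
/-- The bijection between the graph product and normal forms. -/
noncomputable def nfEquiv : GraphProduct Γ G ≃ NF Γ G :=
  ⟨toNF Γ G, ofNF Γ G, ofNF_toNF, toNF_ofNF⟩


section Transfer

variable {H : V → Type*} [∀ v, Group (H v)]

variable (H) in
/-- Transfer a word along a family of bijections. -/
def mapW (φ : ∀ v, G v ≃ H v) (w : List (Ltr G)) : List (Ltr H) :=
  w.map fun a => ⟨a.1, φ a.1 a.2⟩

variable (φ : ∀ v, G v ≃ H v) (hφ : ∀ v, φ v 1 = 1)

theorem mapW_nil : mapW H φ ([] : List (Ltr G)) = [] := rfl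

theorem mapW_cons (a : Ltr G) (w : List (Ltr G)) :
    mapW H φ (a :: w) = ⟨a.1, φ a.1 a.2⟩ :: mapW H φ w := rfl

include hφ in
theorem mapW_ne_one {v : V} {x : G v} (hx : x ≠ 1) : φ v x ≠ 1 := fun h =>
  hx ((φ v).injective (h.trans (hφ v).symm))

theorem canReach_mapW (v : V) (w : List (Ltr G)) :
    CanReach Γ H v (mapW H φ w) ↔ CanReach Γ G v w := by
  induction w with
  | nil => rfl
  | cons a w ih => rw [mapW_cons]; simp [CanReach, ih]

include hφ in
theorem red_mapW {w : List (Ltr G)} (hw : Red Γ G w) : Red Γ H (mapW H φ w) := by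
  induction hw with
  | nil => exact Red.nil
  | @cons v g w hg hr hred ih =>
      rw [mapW_cons]
      refine Red.cons (mapW_ne_one φ hφ hg) ?_ ih
      show ¬ CanReach Γ H v (mapW H φ w)
      rw [canReach_mapW]
      exact hr

theorem weq_mapW {w w' : List (Ltr G)} (h : WEq Γ G w w') :
    WEq Γ H (mapW H φ w) (mapW H φ w') := by
  induction h with
  | refl => exact WEq.refl _
  | symm _ ih => exact ih.symm
  | trans _ _ ih1 ih2 => exact ih1.trans ih2
  | cons a _ ih => exact WEq.cons _ ih
  | swap a b w hab => exact WEq.swap ⟨a.1, φ a.1 a.2⟩ ⟨b.1, φ b.1 b.2⟩ _ hab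

include hφ in
theorem mapW_lmul (v : V) (s : G v) (hs : s ≠ 1) (w : List (Ltr G)) :
    ∃ t : H v, t ≠ 1 ∧ mapW H φ (lmul Γ G v s w) = lmul Γ H v t (mapW H φ w) := by
  induction w with
  | nil =>
      refine ⟨φ v s, mapW_ne_one φ hφ hs, ?_⟩
      rw [lmul_nil, if_neg hs, mapW_nil, lmul_nil, if_neg (mapW_ne_one φ hφ hs)]
      rfl
  | cons a w ih =>
      obtain ⟨z, c⟩ := a
      by_cases hzv : z = v
      · subst hzv
        refine ⟨φ z (s * c) * (φ z c)⁻¹, ?_, ?_⟩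
        · rw [Ne, mul_inv_eq_one]
          exact fun h => hs (by
            have := (φ z).injective h
            rwa [mul_eq_right] at this)
        · rw [lmul_cons_same, mapW_cons, lmul_cons_same, inv_mul_cancel_right]
          by_cases hsc : s * c = 1
          · rw [if_pos hsc, if_pos (by rw [hsc, hφ])]
          · rw [if_neg hsc, if_neg (mapW_ne_one φ hφ hsc)]
            rfl
      · by_cases hvz : Γ.Adj v z
        · obtain ⟨t, ht, hmap⟩ := ih
          refine ⟨t, ht, ?_⟩
          rw [lmul_cons_adj hvz, mapW_cons, hmap, mapW_cons, lmul_cons_adj hvz]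
        · refine ⟨φ v s, mapW_ne_one φ hφ hs, ?_⟩
          rw [lmul_cons_blk hzv hvz, if_neg hs, mapW_cons, mapW_cons]
          dsimp only
          rw [lmul_cons_blk hzv hvz, if_neg (mapW_ne_one φ hφ hs)]

/-- Transfer of normal forms. -/
def nfMap : NF Γ G → NF Γ H :=
  Quotient.map (fun w => ⟨mapW H φ w.1, red_mapW φ hφ w.2⟩) fun _ _ h => weq_mapW φ h

theorem nfMap_Lmul (v : V) (s : G v) (hs : s ≠ 1) (n : NF Γ G) :
    ∃ t : H v, t ≠ 1 ∧ nfMap φ hφ (Lmul v s n) = Lmul v t (nfMap φ hφ n) := by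
  induction n using Quotient.ind with
  | _ w =>
      obtain ⟨t, ht, hmap⟩ := mapW_lmul φ hφ v s hs w.1
      exact ⟨t, ht, congrArg _ (Subtype.ext hmap)⟩

theorem mapW_mapW (w : List (Ltr G)) :
    mapW G (fun v => (φ v).symm) (mapW H φ w) = w := by
  induction w with
  | nil => rfl
  | cons a w ih => rw [mapW_cons, mapW_cons, ih]; simp

theorem mapW_mapW' (w : List (Ltr H)) :
    mapW H φ (mapW G (fun v => (φ v).symm) w) = w := by
  induction w with
  | nil => rfl
  | cons a w ih => rw [mapW_cons, mapW_cons, ih]; simp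

include hφ in
theorem hφ_symm : ∀ v, (φ v).symm 1 = 1 := fun v => by
  rw [Equiv.symm_apply_eq, hφ]

include hφ in
theorem nfMap_nfMap (n : NF Γ G) :
    nfMap (fun v => (φ v).symm) (hφ_symm φ hφ) (nfMap φ hφ n) = n := by
  induction n using Quotient.ind with
  | _ w => exact congrArg _ (Subtype.ext (mapW_mapW φ w.1))

include hφ in
theorem nfMap_nfMap' (n : NF Γ H) :
    nfMap φ hφ (nfMap (fun v => (φ v).symm) (hφ_symm φ hφ) n) = n := by
  induction n using Quotient.ind with
  | _ w => exact congrArg _ (Subtype.ext (mapW_mapW' φ w.1))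

/-- The transfer map between the two graph products. -/
noncomputable def transFun (x : GraphProduct Γ G) : GraphProduct Γ H :=
  (ofNF Γ H (nfMap φ hφ (toNF Γ G x⁻¹)))⁻¹

theorem toNF_of_mul {v : V} (g : G v) (x : GraphProduct Γ G) :
    toNF Γ G (GraphProduct.of Γ G g * x) = Lmul v g (toNF Γ G x) := by
  unfold toNF
  rw [map_mul, Equiv.Perm.mul_apply, nfAct_of]
  rfl

theorem ofNF_Lmul {v : V} (g : G v) (n : NF Γ G) :
    ofNF Γ G (Lmul v g n) = GraphProduct.of Γ G g * ofNF Γ G n := by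
  induction n using Quotient.ind with
  | _ w => exact prodW_lmul v g w.1

include hφ in
theorem transFun_leftinv (x : GraphProduct Γ G) :
    transFun (fun v => (φ v).symm) (hφ_symm φ hφ) (transFun φ hφ x) = x := by
  unfold transFun
  rw [inv_inv, toNF_ofNF, nfMap_nfMap φ hφ, ofNF_toNF, inv_inv]

include hφ in
theorem transFun_rightinv (y : GraphProduct Γ H) :
    transFun φ hφ (transFun (fun v => (φ v).symm) (hφ_symm φ hφ) y) = y := by
  unfold transFun
  rw [inv_inv, toNF_ofNF, nfMap_nfMap' φ hφ, ofNF_toNF, inv_inv]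

include hφ in
theorem transFun_mul_of {v : V} (s : G v) (hs : s ≠ 1) (x : GraphProduct Γ G) :
    ∃ t : H v, t ≠ 1 ∧
      transFun φ hφ (x * GraphProduct.of Γ G s) =
        transFun φ hφ x * GraphProduct.of Γ H t := by
  obtain ⟨t, ht, hmap⟩ := nfMap_Lmul φ hφ v s⁻¹ (inv_ne_one.mpr hs) (toNF Γ G x⁻¹)
  refine ⟨t⁻¹, inv_ne_one.mpr ht, ?_⟩
  unfold transFun
  rw [mul_inv_rev, ← map_inv (GraphProduct.of Γ G), toNF_of_mul, hmap, ofNF_Lmul,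
    mul_inv_rev, ← map_inv (GraphProduct.of Γ H)]

theorem mem_genset_iff (x y : GraphProduct Γ G) :
    (x⁻¹ * y ∈ ⋃ v, (fun g => GraphProduct.of Γ G g) '' {s : G v | s ≠ 1}) ↔
    ∃ v, ∃ s : G v, s ≠ 1 ∧ y = x * GraphProduct.of Γ G s := by
  simp only [Set.mem_iUnion, Set.mem_image, Set.mem_setOf_eq]
  constructor
  · rintro ⟨v, s, hs, heq⟩
    exact ⟨v, s, hs, by rw [heq, mul_inv_cancel_left]⟩
  · rintro ⟨v, s, hs, rfl⟩
    exact ⟨v, s, hs, by rw [inv_mul_cancel_left]⟩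

include hφ in
theorem transFun_adj (x y : GraphProduct Γ G)
    (h : (cayley (GraphProduct Γ G)
      (⋃ v, (fun g => GraphProduct.of Γ G g) '' {x : G v | x ≠ 1})).Adj x y) :
    (cayley (GraphProduct Γ H)
      (⋃ v, (fun h => GraphProduct.of Γ H h) '' {x : H v | x ≠ 1})).Adj
      (transFun φ hφ x) (transFun φ hφ y) := by
  have hinj : Function.Injective (transFun (Γ := Γ) φ hφ) :=
    Function.LeftInverse.injective (transFun_leftinv (Γ := Γ) φ hφ)
  rw [cayley, SimpleGraph.fromRel_adj] at h ⊢
  obtain ⟨hne, hrel⟩ := h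
  refine ⟨fun he => hne (hinj he), ?_⟩
  rcases hrel with h1 | h1
  · rw [mem_genset_iff] at h1
    obtain ⟨v, s, hs, rfl⟩ := h1
    obtain ⟨t, ht, heq⟩ := transFun_mul_of φ hφ s hs x
    left
    rw [mem_genset_iff]
    exact ⟨v, t, ht, heq⟩
  · rw [mem_genset_iff] at h1
    obtain ⟨v, s, hs, rfl⟩ := h1
    obtain ⟨t, ht, heq⟩ := transFun_mul_of φ hφ s hs y
    right
    rw [mem_genset_iff]
    exact ⟨v, t, ht, heq⟩

end Transfer

end GPAux

/-- Graph products over a finite graph of finite vertex groups of equal orders have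
isomorphic Cayley graphs with respect to the unions of all nontrivial vertex elements;
in particular the graph products are isometric for the corresponding word metrics. -/
theorem stmt_11 {V : Type*} [Fintype V] (Γ : SimpleGraph V) (G H : V → Type*)
    [∀ v, Group (G v)] [∀ v, Group (H v)] [∀ v, Finite (G v)] [∀ v, Finite (H v)]
    (hcard : ∀ v, Nat.card (G v) = Nat.card (H v)) :
    Nonempty (cayley (GraphProduct Γ G)
        (⋃ v, (fun g => GraphProduct.of Γ G g) '' {x : G v | x ≠ 1})
      ≃g cayley (GraphProduct Γ H)
        (⋃ v, (fun h => GraphProduct.of Γ H h) '' {x : H v | x ≠ 1})) := by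
  classical
  have hne : ∀ v, Nonempty (G v ≃ H v) := fun v => Finite.card_eq.mp (hcard v)
  let φ0 : ∀ v, G v ≃ H v := fun v => Classical.choice (hne v)
  let φ : ∀ v, G v ≃ H v := fun v => (φ0 v).trans (Equiv.swap (φ0 v 1) 1)
  have hφ : ∀ v, φ v 1 = 1 := fun v => by simp [φ, Equiv.swap_apply_left]
  refine ⟨⟨⟨GPAux.transFun φ hφ,
      GPAux.transFun (fun v => (φ v).symm) (GPAux.hφ_symm φ hφ),
      GPAux.transFun_leftinv φ hφ, GPAux.transFun_rightinv φ hφ⟩, ?_⟩⟩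
  intro a b
  constructor
  · intro h
    have h2 := GPAux.transFun_adj (fun v => (φ v).symm) (GPAux.hφ_symm φ hφ) _ _ h
    simp only [Equiv.coe_fn_mk] at h2
    rwa [GPAux.transFun_leftinv φ hφ, GPAux.transFun_leftinv φ hφ] at h2
  · intro h
    exact GPAux.transFun_adj φ hφ a b h
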